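/- arXiv:1810.13235 — 4 statements merged into one kernel-verified Lean document; each statement's English description precedes it below -/
import Mathlib

section
/- If f: (0,∞) → ℝ is differentiable at t > 0 and α ∈ (0,1], then the α-fractional derivative of f exists at t and equals D^α(f)(t) = t^{1-α} · f'(t). -/
open Real Filter

/-- The Katugampola (α-fractional / conformable) derivative of `y` at `t` equals `L`. -/
def hasKatDerivAt (α : ℝ) (y : ℝ → ℝ) (L t : ℝ) : Prop :=
  Filter.Tendsto (fun ε : ℝ => (y (t * Real.exp (ε * t ^ (-α))) - y t) / ε)
    (nhdsWithin 0 {(0 : ℝ)}ᶜ) (nhds L)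

noncomputable def katCurve (α t ε : ℝ) : ℝ := t * exp (ε * t ^ (-α))

@[simp]
lemma katCurve_zero (α t : ℝ) : katCurve α t 0 = t := by
  simp [katCurve]

lemma hasKatDerivAt_iff_hasDerivAt_comp_katCurve (α : ℝ) (y : ℝ → ℝ) (L t : ℝ) :
    hasKatDerivAt α y L t ↔ HasDerivAt (fun ε => y (katCurve α t ε)) L 0 := by
  rw [hasDerivAt_iff_tendsto_slope, hasKatDerivAt]
  refine tendsto_congr fun ε => ?_
  simp [slope_def_field, katCurve]

lemma hasDerivAt_katCurve_zero (α : ℝ) {t : ℝ} (ht : 0 < t) :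
    HasDerivAt (katCurve α t) (t ^ (1 - α)) 0 := by
  have hlin : HasDerivAt (fun ε : ℝ => ε * t ^ (-α)) (t ^ (-α)) 0 := by
    simpa using (hasDerivAt_id (0 : ℝ)).mul_const (t ^ (-α))
  have hderiv : t * (exp (0 * t ^ (-α)) * t ^ (-α)) = t ^ (1 - α) := by
    rw [zero_mul, exp_zero, one_mul, sub_eq_add_neg, rpow_add ht, rpow_one]
  have hcurve := hlin.exp.const_mul t
  rwa [hderiv] at hcurve

theorem katDeriv_of_hasDerivAt_general (α t : ℝ) (f : ℝ → ℝ) (f' : ℝ)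
    (ht : 0 < t) (hf : HasDerivAt f f' t) :
    hasKatDerivAt α f (t ^ (1 - α) * f') t := by
  rw [hasKatDerivAt_iff_hasDerivAt_comp_katCurve, mul_comm]
  exact (katCurve_zero α t ▸ hf).comp 0 (hasDerivAt_katCurve_zero α ht)

theorem katDeriv_of_hasDerivAt (α t : ℝ) (f : ℝ → ℝ) (f' : ℝ)
    (hα : 0 < α) (hα1 : α ≤ 1) (ht : 0 < t) (hf : HasDerivAt f f' t) :
    hasKatDerivAt α f (t ^ (1 - α) * f') t :=
  katDeriv_of_hasDerivAt_general α t f f' ht hf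
end

section
/- Let α ∈ (0,1], t₀ > 0, and let a, b: [t₀,∞) → (0,∞) be continuous with ∫_{t₀}^{∞} s^{α-1}/b(s) ds = ∞ and ∫_{t₀}^{∞} s^{α-1}/a(s) ds = ∞. Suppose u: [t₀,∞) → ℝ is eventually positive, the functions a(t)D^α u(t) and b(t)D^α(a(t)D^α u(t)) are differentiable, and D^α(b(t)D^α(a(t)D^α u(t))) ≤ 0 and is not identically zero on any half-line. Then there exists t₁ ≥ t₀ such that for all t ≥ t₁ either (I) u(t) > 0, D^α u(t) > 0, D^α(a(t)D^α u(t)) > 0, or (II) u(t) > 0, D^α u(t) < 0, D^α(a(t)D^α u(t)) > 0. -/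
/-!
Write `v = a D^α u` and `w = b D^α v`. Since `D^α w ≤ 0`, `w` is nonincreasing, and because
`D^α w` vanishes on no half-line, `w` cannot stop at `0`: if `w` ever became nonpositive, it
would fall to some `-c < 0` and stay below it. As `D^α f = t^(1-α) f'`, this gives
`v' ≤ -c t^(α-1) / b`, so the divergence of `∫ s^(α-1)/b` drives `v` to `-∞`; in the same way
the divergence of `∫ s^(α-1)/a` then drives `u` to `-∞`, contradicting `u > 0`. Hence `w > 0`,
so `D^α v > 0` and `v` is strictly increasing: either `v` is eventually positive (case I) or
`v < 0` throughout (case II), and the sign of `v` is that of `D^α u`.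
-/

open Real Filter Set

/-- The Katugampola α-fractional derivative of a differentiable function. -/
noncomputable def katD (α : ℝ) (f : ℝ → ℝ) : ℝ → ℝ := fun t => t ^ (1 - α) * deriv f t

open MeasureTheory Topology

theorem tendsto_atBot_of_deriv_le_const_mul {f g : ℝ → ℝ} {a c : ℝ}
    (hg : ContinuousOn g (Ici a)) (hdiv : Tendsto (fun S => ∫ s in a..S, g s) atTop atTop)
    (hf : ∀ t ≥ a, DifferentiableAt ℝ f t) (hc : c < 0)
    (hle : ∀ᶠ t in atTop, deriv f t ≤ c * g t) : Tendsto f atTop atBot := by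
  obtain ⟨T, hT⟩ := eventually_atTop.mp (hle.and (eventually_ge_atTop a))
  have haT : a ≤ T := (hT T le_rfl).2
  have hint : ∀ t ≥ a, IntervalIntegrable g volume a t := fun t ht =>
    (hg.mono (by simpa [uIcc_of_le ht] using Icc_subset_Ici_self)).intervalIntegrable
  have hbound : ∀ t ≥ T, f t ≤ f T + c * ((∫ s in a..t, g s) - ∫ s in a..T, g s) := by
    intro t ht
    have hgt : ContinuousOn g (Icc T t) := hg.mono (Icc_subset_Ici_iff ht |>.mpr haT)
    have key : f t - f T ≤ ∫ s in T..t, c * g s :=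
      intervalIntegral.sub_le_integral_of_hasDeriv_right_of_le ht
        (fun x hx => (hf x (haT.trans hx.1)).continuousAt.continuousWithinAt)
        (fun x hx => (hf x (haT.trans hx.1.le)).hasDerivAt.hasDerivWithinAt)
        ((continuousOn_const.mul hgt).integrableOn_compact isCompact_Icc)
        (fun x hx => (hT x hx.1.le).1)
    rw [intervalIntegral.integral_const_mul,
      ← intervalIntegral.integral_interval_sub_left (hint t (haT.trans ht)) (hint T haT)] at key
    exact sub_le_iff_le_add'.mp key
  have hlim :
      Tendsto (fun t => f T + c * ((∫ s in a..t, g s) - ∫ s in a..T, g s)) atTop atBot :=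
    tendsto_atBot_add_const_left _ _ ((tendsto_const_mul_atBot_of_neg hc).mpr
      (tendsto_atTop_add_const_right _ _ hdiv))
  exact tendsto_atBot_mono' atTop ((eventually_ge_atTop T).mono hbound) hlim

theorem StrictMonoOn.exists_forall_pos_or_forall_neg {f : ℝ → ℝ} {t₀ : ℝ}
    (hf : StrictMonoOn f (Ici t₀)) :
    (∃ t₁ ≥ t₀, ∀ t ≥ t₁, 0 < f t) ∨ ∀ t ≥ t₀, f t < 0 := by
  by_cases h : ∃ t₂ ≥ t₀, 0 ≤ f t₂
  · obtain ⟨t₂, ht₂, hf₂⟩ := h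
    exact Or.inl ⟨t₂ + 1, by linarith, fun t ht =>
      hf₂.trans_lt (hf ht₂ (show t₀ ≤ t by linarith) (by linarith))⟩
  · exact Or.inr fun t ht => lt_of_not_ge fun hft => h ⟨t, ht, hft⟩

section Katugampola

variable {α t₀ : ℝ} {f : ℝ → ℝ}

theorem deriv_eq_rpow_mul_katD {t : ℝ} (ht : 0 < t) :
    deriv f t = t ^ (α - 1) * katD α f t := by
  rw [katD, ← mul_assoc, ← rpow_add ht]
  norm_num

theorem antitoneOn_of_katD_nonpos (ht₀ : 0 < t₀) (hf : ∀ t ≥ t₀, DifferentiableAt ℝ f t)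
    (h : ∀ t ≥ t₀, katD α f t ≤ 0) : AntitoneOn f (Ici t₀) := by
  refine antitoneOn_of_deriv_nonpos (convex_Ici t₀)
    (fun t ht => (hf t ht).continuousAt.continuousWithinAt) ?_ ?_ <;> rw [interior_Ici]
  · exact fun t ht => (hf t ht.le).differentiableWithinAt
  · intro t ht
    have htpos : 0 < t := ht₀.trans ht
    rw [deriv_eq_rpow_mul_katD htpos]
    exact mul_nonpos_of_nonneg_of_nonpos (rpow_pos_of_pos htpos _).le (h t ht.le)

theorem strictMonoOn_of_katD_pos (ht₀ : 0 < t₀) (hf : ∀ t ≥ t₀, DifferentiableAt ℝ f t)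
    (h : ∀ t ≥ t₀, 0 < katD α f t) : StrictMonoOn f (Ici t₀) := by
  refine strictMonoOn_of_deriv_pos (convex_Ici t₀)
    (fun t ht => (hf t ht).continuousAt.continuousWithinAt) ?_
  rw [interior_Ici]
  intro t ht
  have htpos : 0 < t := ht₀.trans ht
  rw [deriv_eq_rpow_mul_katD htpos]
  exact mul_pos (rpow_pos_of_pos htpos _) (h t ht.le)

theorem exists_lt_zero_of_katD_nonpos (ht₀ : 0 < t₀)
    (hf : ∀ t ≥ t₀, DifferentiableAt ℝ f t) (hneg : ∀ t ≥ t₀, katD α f t ≤ 0)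
    (hnz : ∀ T ≥ t₀, ∃ t ≥ T, katD α f t ≠ 0) {t₂ : ℝ} (ht₂ : t₀ ≤ t₂) (hf₂ : f t₂ ≤ 0) :
    ∃ t ≥ t₂, f t < 0 := by
  by_contra! hnonneg
  have hanti := antitoneOn_of_katD_nonpos ht₀ hf hneg
  have hzero : ∀ t ≥ t₂, f t = 0 := fun t ht =>
    le_antisymm ((hanti ht₂ (ht₂.trans ht) ht).trans hf₂) (hnonneg t ht)
  obtain ⟨t, ht, hne⟩ := hnz (t₂ + 1) (by linarith)
  have hlocal : f =ᶠ[𝓝 t] fun _ => 0 :=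
    eventually_of_mem (Ioi_mem_nhds (by linarith : t₂ < t)) fun s hs => hzero s hs.le
  exact hne (by rw [katD, hlocal.deriv_eq, deriv_const, mul_zero])

theorem tendsto_atBot_of_mul_katD_le_neg {q : ℝ → ℝ} {c : ℝ} (ht₀ : 0 < t₀)
    (hq : ContinuousOn q (Ici t₀)) (hqpos : ∀ t ∈ Ici t₀, 0 < q t)
    (hdiv : Tendsto (fun S => ∫ s in t₀..S, s ^ (α - 1) / q s) atTop atTop)
    (hf : ∀ t ≥ t₀, DifferentiableAt ℝ f t) (hc : c < 0)
    (hle : ∀ᶠ t in atTop, q t * katD α f t ≤ c) : Tendsto f atTop atBot := by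
  have hcont : ContinuousOn (fun s => s ^ (α - 1) / q s) (Ici t₀) :=
    (continuousOn_id.rpow_const fun s hs => Or.inl (ht₀.trans_le hs).ne').div hq
      fun s hs => (hqpos s hs).ne'
  refine tendsto_atBot_of_deriv_le_const_mul hcont hdiv hf hc ?_
  filter_upwards [hle, eventually_ge_atTop t₀] with t hlet ht
  have htpos : 0 < t := ht₀.trans_le ht
  have hqt : 0 < q t := hqpos t ht
  calc deriv f t = t ^ (α - 1) / q t * (q t * katD α f t) := by
        rw [deriv_eq_rpow_mul_katD htpos]; field_simp
    _ ≤ t ^ (α - 1) / q t * c := mul_le_mul_of_nonneg_left hlet (by positivity)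
    _ = c * (t ^ (α - 1) / q t) := mul_comm _ _

end Katugampola

theorem kiguradze_classification_general (α t₀ : ℝ) (a b u : ℝ → ℝ)
    (ht₀ : 0 < t₀)
    (ha : ContinuousOn a (Set.Ici t₀)) (hapos : ∀ t ∈ Set.Ici t₀, 0 < a t)
    (hb : ContinuousOn b (Set.Ici t₀)) (hbpos : ∀ t ∈ Set.Ici t₀, 0 < b t)
    (hdivb : Tendsto (fun T => ∫ s in t₀..T, s ^ (α - 1) / b s) atTop atTop)
    (hdiva : Tendsto (fun T => ∫ s in t₀..T, s ^ (α - 1) / a s) atTop atTop)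
    (hupos : ∃ T ≥ t₀, ∀ t ≥ T, 0 < u t)
    (hu : ∀ t ≥ t₀, DifferentiableAt ℝ u t)
    (hd1 : ∀ t ≥ t₀, DifferentiableAt ℝ (fun s => a s * katD α u s) t)
    (hd2 : ∀ t ≥ t₀,
      DifferentiableAt ℝ (fun s => b s * katD α (fun x => a x * katD α u x) s) t)
    (hneg : ∀ t ≥ t₀,
      katD α (fun s => b s * katD α (fun x => a x * katD α u x) s) t ≤ 0)
    (hnz : ∀ T ≥ t₀, ∃ t ≥ T,
      katD α (fun s => b s * katD α (fun x => a x * katD α u x) s) t ≠ 0) :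
    ∃ t₁ ≥ t₀,
      (∀ t ≥ t₁, 0 < u t ∧ 0 < katD α u t ∧
        0 < katD α (fun s => a s * katD α u s) t) ∨
      (∀ t ≥ t₁, 0 < u t ∧ katD α u t < 0 ∧
        0 < katD α (fun s => a s * katD α u s) t) := by
  obtain ⟨Tu, -, hupos⟩ := hupos
  set v : ℝ → ℝ := fun s => a s * katD α u s
  set w : ℝ → ℝ := fun s => b s * katD α v s
  have hwpos : ∀ t ≥ t₀, 0 < w t := by
    by_contra! hnonpos
    obtain ⟨t₂, ht₂, hw₂⟩ := hnonpos
    obtain ⟨t₃, ht₃, hw₃⟩ := exists_lt_zero_of_katD_nonpos ht₀ hd2 hneg hnz ht₂ hw₂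
    have hwanti := antitoneOn_of_katD_nonpos ht₀ hd2 hneg
    have hv_bot : Tendsto v atTop atBot :=
      tendsto_atBot_of_mul_katD_le_neg ht₀ hb hbpos hdivb hd1 hw₃ <| eventually_atTop.mpr
        ⟨t₃, fun t ht => hwanti (ht₂.trans ht₃) (ht₂.trans (ht₃.trans ht)) ht⟩
    have hu_bot : Tendsto u atTop atBot :=
      tendsto_atBot_of_mul_katD_le_neg ht₀ ha hapos hdiva hu (by norm_num : (-1 : ℝ) < 0)
        (hv_bot.eventually_le_atBot (-1))
    obtain ⟨t, hut, htu⟩ :=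
      ((hu_bot.eventually_le_atBot 0).and (eventually_ge_atTop Tu)).exists
    exact (hupos t htu).not_ge hut
  have hkv : ∀ t ≥ t₀, 0 < katD α v t := fun t ht =>
    pos_of_mul_pos_right (hwpos t ht) (hbpos t ht).le
  rcases (strictMonoOn_of_katD_pos ht₀ hd1 hkv).exists_forall_pos_or_forall_neg with
    ⟨t₁, ht₁, hvpos⟩ | hvneg
  · refine ⟨max t₁ Tu, le_max_of_le_left ht₁, Or.inl fun t ht => ?_⟩
    have ht₀t : t₀ ≤ t := ht₁.trans (le_of_max_le_left ht)
    exact ⟨hupos t (le_of_max_le_right ht),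
      pos_of_mul_pos_right (hvpos t (le_of_max_le_left ht)) (hapos t ht₀t).le, hkv t ht₀t⟩
  · refine ⟨max t₀ Tu, le_max_left _ _, Or.inr fun t ht => ?_⟩
    have ht₀t : t₀ ≤ t := le_of_max_le_left ht
    exact ⟨hupos t (le_of_max_le_right ht),
      neg_of_mul_neg_right (hvneg t ht₀t) (hapos t ht₀t).le, hkv t ht₀t⟩

theorem kiguradze_classification (α t₀ : ℝ) (a b u : ℝ → ℝ)
    (hα : 0 < α) (hα1 : α ≤ 1) (ht₀ : 0 < t₀)
    (ha : ContinuousOn a (Set.Ici t₀)) (hapos : ∀ t ∈ Set.Ici t₀, 0 < a t)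
    (hb : ContinuousOn b (Set.Ici t₀)) (hbpos : ∀ t ∈ Set.Ici t₀, 0 < b t)
    (hdivb : Tendsto (fun T => ∫ s in t₀..T, s ^ (α - 1) / b s) atTop atTop)
    (hdiva : Tendsto (fun T => ∫ s in t₀..T, s ^ (α - 1) / a s) atTop atTop)
    (hupos : ∃ T ≥ t₀, ∀ t ≥ T, 0 < u t)
    (hu : ∀ t ≥ t₀, DifferentiableAt ℝ u t)
    (hd1 : ∀ t ≥ t₀, DifferentiableAt ℝ (fun s => a s * katD α u s) t)
    (hd2 : ∀ t ≥ t₀,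
      DifferentiableAt ℝ (fun s => b s * katD α (fun x => a x * katD α u x) s) t)
    (hneg : ∀ t ≥ t₀,
      katD α (fun s => b s * katD α (fun x => a x * katD α u x) s) t ≤ 0)
    (hnz : ∀ T ≥ t₀, ∃ t ≥ T,
      katD α (fun s => b s * katD α (fun x => a x * katD α u x) s) t ≠ 0) :
    ∃ t₁ ≥ t₀,
      (∀ t ≥ t₁, 0 < u t ∧ 0 < katD α u t ∧
        0 < katD α (fun s => a s * katD α u s) t) ∨
      (∀ t ≥ t₁, 0 < u t ∧ katD α u t < 0 ∧
        0 < katD α (fun s => a s * katD α u s) t) :=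
  kiguradze_classification_general α t₀ a b u ht₀ ha hapos hb hbpos hdivb hdiva hupos hu hd1 hd2
    hneg hnz
end

section
/- Under the hypotheses of the previous Riccati estimate, if moreover limsup_{t→∞} ∫_{t₀}^{t} ( s^{α-1}ρ(s)A(s) − (1/4)(ρ'(s))²/ρ(s) · s^{1-α} b(s) ) ds = ∞, then no positive differentiable function w on any half-line [t₁,∞) can satisfy w'(t) ≤ (ρ'(t)/ρ(t))w(t) − t^{α-1}ρ(t)A(t) − (t^{α-1}/(ρ(t)b(t)))w(t)² for all t ≥ t₁. -/
open Real Filter Set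

theorem riccati_nonexistence (α t₀ : ℝ) (ρ ρ' b A : ℝ → ℝ)
    (hα : 0 < α) (hα1 : α ≤ 1) (ht₀ : 0 < t₀)
    (hρ : ∀ t ≥ t₀, HasDerivAt ρ (ρ' t) t) (hρpos : ∀ t ≥ t₀, 0 < ρ t)
    (hρ'c : ContinuousOn ρ' (Set.Ici t₀))
    (hb : ContinuousOn b (Set.Ici t₀)) (hbpos : ∀ t ≥ t₀, 0 < b t)
    (hA : ContinuousOn A (Set.Ici t₀))
    (hlimsup : ∀ C : ℝ, ∃ᶠ t in atTop,
      C ≤ ∫ s in t₀..t, (s ^ (α - 1) * ρ s * A s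
        - (1 / 4) * ((ρ' s) ^ 2 / ρ s) * s ^ (1 - α) * b s)) :
    ¬ ∃ (t₁ : ℝ) (w w' : ℝ → ℝ), t₁ ≥ t₀ ∧
      ∀ t ≥ t₁, 0 < w t ∧ HasDerivAt w (w' t) t ∧
        w' t ≤ (ρ' t / ρ t) * w t - t ^ (α - 1) * ρ t * A t
          - (t ^ (α - 1) / (ρ t * b t)) * (w t) ^ 2 := by
  rintro ⟨t₁, w, w', ht₁, hw⟩
  set G : ℝ → ℝ := fun s => s ^ (α - 1) * ρ s * A s
        - (1 / 4) * ((ρ' s) ^ 2 / ρ s) * s ^ (1 - α) * b s with hG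
  -- continuity of G on Ici t₀
  have hρc : ContinuousOn ρ (Set.Ici t₀) := fun t ht =>
    (hρ t ht).continuousAt.continuousWithinAt
  have hne : ∀ s ∈ Set.Ici t₀, (s : ℝ) ≠ 0 := fun s hs =>
    (lt_of_lt_of_le ht₀ hs).ne'
  have hpow1 : ContinuousOn (fun s : ℝ => s ^ (α - 1)) (Set.Ici t₀) :=
    ContinuousOn.rpow_const continuousOn_id (fun s hs => Or.inl (hne s hs))
  have hpow2 : ContinuousOn (fun s : ℝ => s ^ (1 - α)) (Set.Ici t₀) :=
    ContinuousOn.rpow_const continuousOn_id (fun s hs => Or.inl (hne s hs))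
  have hGc : ContinuousOn G (Set.Ici t₀) := by
    apply ContinuousOn.sub
    · exact (hpow1.mul hρc).mul hA
    · exact ((continuousOn_const.mul ((hρ'c.pow 2).div hρc
        (fun s hs => (hρpos s hs).ne'))).mul hpow2).mul hb
  have hGint : ∀ u v : ℝ, t₀ ≤ u → t₀ ≤ v → IntervalIntegrable G MeasureTheory.volume u v := by
    intro u v hu hv
    apply ContinuousOn.intervalIntegrable
    apply hGc.mono
    exact fun s hs => le_trans (le_inf hu hv) hs.1
  -- pointwise estimate
  set t₂ : ℝ := max t₁ t₀ + 1 with ht₂def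
  have ht₂₀ : t₀ < t₂ := lt_of_le_of_lt (le_max_right _ _) (lt_add_one _)
  have ht₂₁ : t₁ ≤ t₂ := le_trans (le_max_left _ _) (le_of_lt (lt_add_one _))
  have key : ∀ t ≥ t₂, w' t + G t ≤ 0 := by
    intro t ht
    have ht0 : (0:ℝ) < t := lt_of_lt_of_le ht₀ (le_trans ht₂₀.le ht)
    have htt₀ : t₀ ≤ t := le_trans ht₂₀.le ht
    obtain ⟨hwpos, -, hineq⟩ := hw t (le_trans ht₂₁ ht)
    set x := t ^ (α - 1) with hx
    set y := t ^ (1 - α) with hy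
    have hxpos : 0 < x := Real.rpow_pos_of_pos ht0 _
    have hypos : 0 < y := Real.rpow_pos_of_pos ht0 _
    have hxy : x * y = 1 := by
      rw [hx, hy, ← Real.rpow_add ht0]
      norm_num
    have hr : 0 < ρ t := hρpos t htt₀
    have hB : 0 < b t := hbpos t htt₀
    have hsq : (ρ' t / ρ t) * w t - (x / (ρ t * b t)) * (w t) ^ 2
        ≤ (1 / 4) * ((ρ' t) ^ 2 / ρ t) * y * b t := by
      have hyx : y = x⁻¹ := by
        field_simp
        nlinarith [hxy]
      rw [hyx, ← sub_nonneg]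
      have heq : (1 / 4) * ((ρ' t) ^ 2 / ρ t) * x⁻¹ * b t -
          ((ρ' t / ρ t) * w t - (x / (ρ t * b t)) * (w t) ^ 2)
          = (2 * x * w t - ρ' t * b t) ^ 2 / (4 * ρ t * b t * x) := by
        field_simp
        ring
      rw [heq]
      positivity
    simp only [hG]
    nlinarith [hineq, hsq]
  -- F t = w t + ∫_{t₂}^t G is antitone on [t₂, ∞)
  set F : ℝ → ℝ := fun t => w t + ∫ s in t₂..t, G s with hF
  have hF' : ∀ t ≥ t₂, HasDerivAt F (w' t + G t) t := by
    intro t ht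
    have htt₀ : t₀ < t := lt_of_lt_of_le ht₂₀ ht
    have hprim : HasDerivAt (fun u => ∫ s in t₂..u, G s) (G t) t := by
      apply intervalIntegral.integral_hasDerivAt_right
        (hGint t₂ t ht₂₀.le (le_trans ht₂₀.le ht))
      · exact ⟨Set.Ioi t₀, Ioi_mem_nhds htt₀,
          ((hGc.mono Ioi_subset_Ici_self).aestronglyMeasurable measurableSet_Ioi)⟩
      · exact (hGc.continuousAt (Ici_mem_nhds htt₀))
    exact ((hw t (le_trans ht₂₁ ht)).2.1).add hprim
  have hmono : ∀ T ≥ t₂, F T ≤ F t₂ := by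
    intro T hT
    have hanti : AntitoneOn F (Set.Icc t₂ T) := by
      apply antitoneOn_of_deriv_nonpos (convex_Icc _ _)
      · exact fun t ht => ((hF' t ht.1).continuousAt).continuousWithinAt
      · intro t ht
        rw [interior_Icc] at ht
        exact ((hF' t ht.1.le).differentiableAt).differentiableWithinAt
      · intro t ht
        rw [interior_Icc] at ht
        rw [(hF' t ht.1.le).deriv]
        exact key t ht.1.le
    exact hanti (Set.left_mem_Icc.mpr hT) (Set.right_mem_Icc.mpr hT) hT
  -- contradiction
  obtain ⟨T, hTC, hTt₂⟩ := ((hlimsup (w t₂ + ∫ s in t₀..t₂, G s)).and_eventually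
    (eventually_ge_atTop t₂)).exists
  have hsplit : (∫ s in t₀..t₂, G s) + (∫ s in t₂..T, G s) = ∫ s in t₀..T, G s :=
    intervalIntegral.integral_add_adjacent_intervals
      (hGint t₀ t₂ le_rfl ht₂₀.le) (hGint t₂ T ht₂₀.le (le_trans ht₂₀.le hTt₂))
  have h1 : F T ≤ F t₂ := hmono T hTt₂
  have h2 : F t₂ = w t₂ := by simp [hF]
  have h3 : 0 < w T := (hw T (le_trans ht₂₁ hTt₂)).1
  simp only [hF] at h1
  rw [intervalIntegral.integral_same] at h1
  linarith
end

section
/- Philos-type kernel estimate: Let H be continuous on D = {(t,s): t ≥ s ≥ t₀} with H(t,t) = 0, H(t,s) > 0 for t > s, and ∂H/∂s ≤ 0, and set h(t,s) = ∂H/∂s(t,s) + H(t,s)ρ'(s)/ρ(s) for a positive C¹ function ρ. If w > 0 is differentiable on [t₁,∞) and satisfies w'(s) ≤ (ρ'(s)/ρ(s))w(s) − s^{α-1}ρ(s)A(s) − (s^{α-1}/(ρ(s)b(s)))w(s)², then for all t > t₁: ∫_{t₁}^{t} ( H(t,s)s^{α-1}ρ(s)A(s) − (1/4)ρ(s)b(s)s^{1-α}h(t,s)²/H(t,s)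 ) ds ≤ H(t,t₁)·w(t₁). -/
open Real Filter Set

theorem philos_kernel_estimate (α t₀ t₁ : ℝ) (ρ ρ' b A w w' : ℝ → ℝ)
    (H Hs : ℝ → ℝ → ℝ)
    (hα : 0 < α) (hα1 : α ≤ 1) (ht₀ : 0 < t₀) (ht₁ : t₀ ≤ t₁)
    (hHcont : ContinuousOn (fun p : ℝ × ℝ => H p.1 p.2)
      {p : ℝ × ℝ | t₀ ≤ p.2 ∧ p.2 ≤ p.1})
    (hHdiag : ∀ t ≥ t₀, H t t = 0)
    (hHpos : ∀ t s, t₀ ≤ s → s < t → 0 < H t s)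
    (hHs : ∀ t s, t₀ ≤ s → s < t → HasDerivAt (fun x => H t x) (Hs t s) s)
    (hHsneg : ∀ t s, t₀ ≤ s → s < t → Hs t s ≤ 0)
    (hρ : ∀ t ≥ t₀, HasDerivAt ρ (ρ' t) t) (hρpos : ∀ t ≥ t₀, 0 < ρ t)
    (hb : ContinuousOn b (Set.Ici t₀)) (hbpos : ∀ t ≥ t₀, 0 < b t)
    (hA : ContinuousOn A (Set.Ici t₀))
    (hw : ∀ t ≥ t₁, HasDerivAt w (w' t) t) (hwpos : ∀ t ≥ t₁, 0 < w t)
    (hric : ∀ s ≥ t₁, w' s ≤ (ρ' s / ρ s) * w s - s ^ (α - 1) * ρ s * A s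
      - (s ^ (α - 1) / (ρ s * b s)) * (w s) ^ 2) :
    ∀ t > t₁,
      (∫ s in t₁..t, (H t s * s ^ (α - 1) * ρ s * A s
        - (1 / 4) * ρ s * b s * s ^ (1 - α)
          * (Hs t s + H t s * (ρ' s / ρ s)) ^ 2 / H t s))
      ≤ H t t₁ * w t₁ := by
  intro t ht
  have hle : t₁ ≤ t := ht.le
  have hHt₁pos : 0 < H t t₁ := hHpos t t₁ ht₁ ht
  have hwt₁pos : 0 < w t₁ := hwpos t₁ le_rfl
  set f : ℝ → ℝ := fun s => H t s * s ^ (α - 1) * ρ s * A s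
      - (1 / 4) * ρ s * b s * s ^ (1 - α)
        * (Hs t s + H t s * (ρ' s / ρ s)) ^ 2 / H t s with hf
  by_cases hInt : IntervalIntegrable f MeasureTheory.volume t₁ t
  · -- main case
    set g : ℝ → ℝ := fun s => -(H t s * w s) with hg
    have hcontH : ContinuousOn (fun s => H t s) (Icc t₁ t) := by
      have : ContinuousOn (fun s : ℝ => (t, s)) (Icc t₁ t) :=
        (continuous_const.prodMk continuous_id).continuousOn
      refine hHcont.comp this ?_
      intro s hs
      exact ⟨ht₁.trans hs.1, hs.2⟩
    have hcontw : ContinuousOn w (Icc t₁ t) := fun s hs =>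
      ((hw s hs.1).continuousAt).continuousWithinAt
    have hcontg : ContinuousOn g (Icc t₁ t) := (hcontH.mul hcontw).neg
    have hderiv : ∀ x ∈ Ioo t₁ t,
        HasDerivWithinAt g (-(Hs t x * w x + H t x * w' x)) (Ioi x) x := by
      intro x hx
      have hx0 : t₀ ≤ x := ht₁.trans hx.1.le
      exact (((hHs t x hx0 hx.2).mul (hw x hx.1.le)).neg).hasDerivWithinAt
    have hφg : ∀ x ∈ Ioo t₁ t, f x ≤ -(Hs t x * w x + H t x * w' x) := by
      intro s hs
      have hs0 : t₀ ≤ s := ht₁.trans hs.1.le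
      have hspos : (0:ℝ) < s := lt_of_lt_of_le ht₀ hs0
      have hHpos' : 0 < H t s := hHpos t s hs0 hs.2
      have hρs : 0 < ρ s := hρpos s hs0
      have hbs : 0 < b s := hbpos s hs0
      have hws : 0 < w s := hwpos s hs.1.le
      have hP : 0 < s ^ (α - 1) := Real.rpow_pos_of_pos hspos _
      have hQ : s ^ (1 - α) = (s ^ (α - 1))⁻¹ := by
        rw [← Real.rpow_neg hspos.le]; ring_nf
      have hric' := hric s hs.1.le
      set e := s ^ (α - 1) with he
      set h := Hs t s + H t s * (ρ' s / ρ s) with hh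
      set K := H t s * e / (ρ s * b s) with hK
      have hKpos : 0 < K := by positivity
      have step2 : Hs t s * w s + H t s * w' s + H t s * e * ρ s * A s
          ≤ h * w s - K * w s ^ 2 := by
        have hmul : H t s * w' s ≤ H t s * ((ρ' s / ρ s) * w s - e * ρ s * A s
            - (e / (ρ s * b s)) * (w s) ^ 2) :=
          mul_le_mul_of_nonneg_left hric' hHpos'.le
        have : h * w s - K * w s ^ 2 = Hs t s * w s
            + H t s * ((ρ' s / ρ s) * w s - e * ρ s * A s
            - (e / (ρ s * b s)) * (w s) ^ 2) + H t s * e * ρ s * A s := by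
          rw [hh, hK]; ring
        rw [this]
        linarith
      have step3 : h * w s - K * w s ^ 2 ≤ h ^ 2 / (4 * K) := by
        rw [le_div_iff₀ (by positivity)]
        nlinarith [sq_nonneg (h - 2 * K * w s)]
      have step4 : h ^ 2 / (4 * K) =
          (1 / 4) * ρ s * b s * e⁻¹ * h ^ 2 / H t s := by
        rw [hK]
        field_simp
      have : f s = H t s * e * ρ s * A s
          - (1 / 4) * ρ s * b s * e⁻¹ * h ^ 2 / H t s := by
        rw [hf]; simp only [hQ, he, hh]
      rw [this, ← step4]
      clear_value e h K
      linarith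
    have hφint : MeasureTheory.IntegrableOn f (Icc t₁ t) MeasureTheory.volume :=
      (intervalIntegrable_iff_integrableOn_Icc_of_le hle).mp hInt
    have key := intervalIntegral.integral_le_sub_of_hasDeriv_right_of_le hle
      hcontg hderiv hφint hφg
    have hgt : g t = 0 := by
      simp [hg, hHdiag t (ht₁.trans hle)]
    have hgt₁ : g t₁ = -(H t t₁ * w t₁) := rfl
    rw [hgt, hgt₁] at key
    linarith
  · rw [intervalIntegral.integral_undef hInt]
    positivity
end
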